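/- arXiv:1605.00351 — 2 statements merged into one kernel-verified Lean document; each statement's English description precedes it below -/
import Mathlib

section
/- Let q be a prime power, c ∈ F_q, n ≥ 2, W ⊆ {0,...,n} (with n ∉ W if q = 2). If the least period of the function γ_{W,c} = Σ_{w ∈ W} (−1)^w δ_w − c δ_0 on Z/(q^n−1)Z does not divide (q^n−1)/Φ_n(q), then there exists a monic irreducible polynomial P of degree n over F_q such that Σ_{w ∈ n−W} [x^w]P(x) ≠ c. -/
/-- `inOmega q n w j` : `j` is a sum of `w` distinct `q`-powers `q^i` with `0 ≤ i ≤ n-1`. -/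
def inOmega (q n w j : ℕ) : Prop :=
  ∃ s : Finset (Fin n), s.card = w ∧ j = ∑ i ∈ s, q ^ (i : ℕ)

open scoped Classical in
/-- The indicator function `δ_w : ℤ/(qⁿ-1)ℤ → R` of `Ω(w)`. -/
noncomputable def deltaFun {R : Type*} [CommRing R] (q n w : ℕ)
    (k : ZMod (q ^ n - 1)) : R :=
  if inOmega q n w k.val then 1 else 0

/-- `f : ℤ/Nℤ → α` is `r`-periodic if `f(i + r) = f(i)` for all `i`. -/
def IsPeriodicZMod {N : ℕ} {α : Type*} (f : ZMod N → α) (r : ℕ) : Prop :=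
  ∀ i : ZMod N, f (i + (r : ZMod N)) = f i

/-- The least period of `f : ℤ/Nℤ → α`. -/
noncomputable def leastPeriod {N : ℕ} {α : Type*} (f : ZMod N → α) : ℕ :=
  sInf {r : ℕ | 0 < r ∧ IsPeriodicZMod f r}


section Aux
open Polynomial Finset IntermediateField
namespace AuxNT

/-- The subgroup of periods. -/
def periodSubgroup {N : ℕ} {α : Type*} (f : ZMod N → α) : AddSubgroup (ZMod N) where
  carrier := {x | ∀ i, f (i + x) = f i}
  zero_mem' := by intro i; simp
  add_mem' := by
    intro x y hx hy i
    have := hx (i + y)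
    rw [show i + y + x = i + (x + y) by ring] at this
    rw [this, hy]
  neg_mem' := by
    intro x hx i
    have := hx (i + -x)
    rw [show i + -x + x = i by ring] at this
    rw [this]

lemma isPeriodic_iff_mem {N : ℕ} {α : Type*} (f : ZMod N → α) (r : ℕ) :
    IsPeriodicZMod f r ↔ (r : ZMod N) ∈ periodSubgroup f := Iff.rfl

lemma leastPeriod_dvd {N : ℕ} {α : Type*} {f : ZMod N → α} {r : ℕ} (hr : 0 < r)
    (h : IsPeriodicZMod f r) : leastPeriod f ∣ r := by
  set S : Set ℕ := {r : ℕ | 0 < r ∧ IsPeriodicZMod f r} with hS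
  have hne : S.Nonempty := ⟨r, hr, h⟩
  have hd : leastPeriod f ∈ S := Nat.sInf_mem hne
  obtain ⟨hdpos, hdper⟩ := hd
  set d := leastPeriod f
  set g := Nat.gcd d r with hg
  have hgpos : 0 < g := Nat.gcd_pos_of_pos_left r hdpos
  have hgper : IsPeriodicZMod f g := by
    rw [isPeriodic_iff_mem]
    have hb := Nat.gcd_eq_gcd_ab d r
    have : ((g : ℤ) : ZMod N) = ((d : ℤ) * Nat.gcdA d r + (r : ℤ) * Nat.gcdB d r : ℤ) := by
      rw [← hb]
    have h2 : ((g : ℕ) : ZMod N) = (Nat.gcdA d r) • ((d : ℕ) : ZMod N)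
        + (Nat.gcdB d r) • ((r : ℕ) : ZMod N) := by
      push_cast at this ⊢
      rw [this, zsmul_eq_mul, zsmul_eq_mul]; push_cast; ring
    rw [h2]
    exact AddSubgroup.add_mem _
      (AddSubgroup.zsmul_mem _ ((isPeriodic_iff_mem f d).mp hdper) _)
      (AddSubgroup.zsmul_mem _ ((isPeriodic_iff_mem f r).mp h) _)
  have hle : d ≤ g := Nat.sInf_le ⟨hgpos, hgper⟩
  have : g ≤ d := Nat.le_of_dvd hdpos (Nat.gcd_dvd_left _ _)
  have : d = g := le_antisymm hle this
  rw [this]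
  exact Nat.gcd_dvd_right _ _

lemma geom_sum_lt {q : ℕ} (hq : 2 ≤ q) (n : ℕ) : ∑ i ∈ range n, q ^ i < q ^ n := by
  induction n with
  | zero => simp
  | succ n ih =>
      rw [Finset.sum_range_succ, pow_succ]
      have : q ^ n * 2 ≤ q ^ n * q := Nat.mul_le_mul_left _ hq
      omega

lemma sum_pow_le {q n : ℕ} {s : Finset ℕ} (hs : s ⊆ range n) :
    ∑ i ∈ s, q ^ i ≤ ∑ i ∈ range n, q ^ i :=
  Finset.sum_le_sum_of_subset hs

lemma sum_pow_lt_pred {q n : ℕ} (hq : 2 ≤ q) (hn : 1 ≤ n) {s : Finset ℕ}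
    (hs : s ⊆ range n) (h : 3 ≤ q ∨ s ≠ range n) : ∑ i ∈ s, q ^ i < q ^ n - 1 := by
  rcases h with h3 | hne
  · have h1 : ∑ i ∈ s, q ^ i ≤ ∑ i ∈ range n, q ^ i := sum_pow_le hs
    have h2 : ∑ i ∈ range n, q ^ i < q ^ n - 1 := by
      clear hs h1 hq s
      induction n with
      | zero => omega
      | succ n ih =>
          rcases Nat.eq_zero_or_pos n with rfl | hn'
          · simp; omega
          · have ihh := ih hn'
            rw [Finset.sum_range_succ, pow_succ]
            have h4 : q ^ n * 3 ≤ q ^ n * q := Nat.mul_le_mul_left _ h3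
            have : 1 ≤ q ^ n := Nat.one_le_pow _ _ (by omega)
            omega
    omega
  · obtain ⟨j, hj, hjs⟩ : ∃ j ∈ range n, j ∉ s := by
      by_contra hcon
      push_neg at hcon
      exact hne (Finset.Subset.antisymm hs hcon)
    have hsub : s ⊆ (range n).erase j := fun x hx =>
      Finset.mem_erase.mpr ⟨fun he => hjs (he ▸ hx), hs hx⟩
    have h1 : ∑ i ∈ s, q ^ i ≤ ∑ i ∈ (range n).erase j, q ^ i :=
      Finset.sum_le_sum_of_subset hsub
    have h2 : ∑ i ∈ (range n).erase j, q ^ i + q ^ j = ∑ i ∈ range n, q ^ i :=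
      Finset.sum_erase_add _ _ hj
    have h3 : ∑ i ∈ range n, q ^ i < q ^ n := geom_sum_lt hq n
    have h4 : 1 ≤ q ^ j := Nat.one_le_pow _ _ (by omega)
    omega

lemma sum_pow_inj {q : ℕ} (hq : 2 ≤ q) :
    ∀ (n : ℕ) (s t : Finset ℕ), s ⊆ range n → t ⊆ range n →
      (∑ i ∈ s, q ^ i) = (∑ i ∈ t, q ^ i) → s = t := by
  intro n
  induction n with
  | zero =>
      intro s t hs ht _
      simp only [Finset.range_zero, Finset.subset_empty] at hs ht
      rw [hs, ht]
  | succ n ih =>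
      intro s t hs ht hsum
      have key : ∀ u : Finset ℕ, u ⊆ range (n+1) → (n ∉ u) → ∑ i ∈ u, q ^ i < q ^ n := by
        intro u hu hnu
        have : u ⊆ range n := by
          intro x hx
          have := hu hx
          rw [Finset.mem_range] at this ⊢
          rcases Nat.lt_succ_iff_lt_or_eq.mp this with h | rfl
          · exact h
          · exact absurd hx hnu
        calc ∑ i ∈ u, q ^ i ≤ ∑ i ∈ range n, q ^ i := sum_pow_le this
          _ < q ^ n := geom_sum_lt hq n
      by_cases hns : n ∈ s <;> by_cases hnt : n ∈ t
      · have hs' : s.erase n ⊆ range n := by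
          intro x hx
          obtain ⟨hxn, hxs⟩ := Finset.mem_erase.mp hx
          have := hs hxs
          rw [Finset.mem_range] at this ⊢
          omega
        have ht' : t.erase n ⊆ range n := by
          intro x hx
          obtain ⟨hxn, hxs⟩ := Finset.mem_erase.mp hx
          have := ht hxs
          rw [Finset.mem_range] at this ⊢
          omega
        have h1 : ∑ i ∈ s.erase n, q ^ i + q ^ n = ∑ i ∈ s, q ^ i :=
          Finset.sum_erase_add _ _ hns
        have h2 : ∑ i ∈ t.erase n, q ^ i + q ^ n = ∑ i ∈ t, q ^ i :=
          Finset.sum_erase_add _ _ hnt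
        have := ih (s.erase n) (t.erase n) hs' ht' (by omega)
        have hse : s = insert n (s.erase n) := (Finset.insert_erase hns).symm
        have hte : t = insert n (t.erase n) := (Finset.insert_erase hnt).symm
        rw [hse, hte, this]
      · exfalso
        have h1 : q ^ n ≤ ∑ i ∈ s, q ^ i := Finset.single_le_sum (fun i _ => Nat.zero_le _) hns
        have h2 := key t ht hnt
        omega
      · exfalso
        have h1 : q ^ n ≤ ∑ i ∈ t, q ^ i := Finset.single_le_sum (fun i _ => Nat.zero_le _) hnt
        have h2 := key s hs hns
        omega
      · have hs' : s ⊆ range n := by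
          intro x hx
          have := hs hx
          rw [Finset.mem_range] at this ⊢
          rcases Nat.lt_succ_iff_lt_or_eq.mp this with h | rfl
          · exact h
          · exact absurd hx hns
        have ht' : t ⊆ range n := by
          intro x hx
          have := ht hx
          rw [Finset.mem_range] at this ⊢
          rcases Nat.lt_succ_iff_lt_or_eq.mp this with h | rfl
          · exact h
          · exact absurd hx hnt
        exact ih s t hs' ht' hsum

lemma deltaFun_map {R S : Type*} [CommRing R] [CommRing S] (f : R →+* S) (q n w : ℕ)
    (k : ZMod (q ^ n - 1)) : f (deltaFun q n w k) = deltaFun q n w k := by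
  unfold deltaFun
  rw [apply_ite f, map_one, map_zero]

lemma inOmega_iff {q n w j : ℕ} :
    inOmega q n w j ↔ ∃ s ∈ (Finset.range n).powersetCard w, j = ∑ i ∈ s, q ^ i := by
  constructor
  · rintro ⟨s, hcard, hsum⟩
    refine ⟨s.image (fun i : Fin n => (i : ℕ)), ?_, ?_⟩
    · rw [Finset.mem_powersetCard]
      constructor
      · intro x hx
        obtain ⟨i, _, rfl⟩ := Finset.mem_image.mp hx
        exact Finset.mem_range.mpr i.isLt
      · rw [Finset.card_image_of_injective _ Fin.val_injective, hcard]
    · rw [hsum, Finset.sum_image (fun a _ b _ h => Fin.val_injective h)]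
  · rintro ⟨s, hs, rfl⟩
    obtain ⟨hssub, hscard⟩ := Finset.mem_powersetCard.mp hs
    have hlt : ∀ m ∈ s, m < n := fun m hm => Finset.mem_range.mp (hssub hm)
    refine ⟨s.attachFin hlt, by rw [Finset.card_attachFin, hscard], ?_⟩
    refine (Finset.sum_bij (fun (a : Fin n) _ => (a : ℕ)) ?_ ?_ ?_ ?_).symm
    · intro a ha
      exact (Finset.mem_attachFin hlt).mp ha
    · intro a _ b _ h
      exact Fin.val_injective h
    · intro m hm
      exact ⟨⟨m, hlt m hm⟩, (Finset.mem_attachFin hlt).mpr hm, rfl⟩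
    · intro a _
      rfl

/-- The Fourier transform of an indicator function `δ_w` is the elementary symmetric sum. -/
lemma indicator_sum {K : Type*} [Field K] {q n w : ℕ} (hq : 2 ≤ q) (hn : 2 ≤ n)
    (hw : w ≤ n) (hw2 : q = 2 → w ≠ n) (ζ : K) :
    ∑ j ∈ range (q ^ n - 1), (deltaFun q n w ((j : ℕ) : ZMod (q ^ n - 1)) : K) * ζ ^ j
      = ∑ s ∈ (range n).powersetCard w, ζ ^ (∑ i ∈ s, q ^ i) := by
  classical
  have hqn1 : 1 ≤ q ^ n := Nat.one_le_pow _ _ (by omega)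
  have hqn4 : 4 ≤ q ^ n := by
    have h22 : (2:ℕ) ^ 2 ≤ q ^ 2 := Nat.pow_le_pow_left hq 2
    have h2n : q ^ 2 ≤ q ^ n := Nat.pow_le_pow_right (by omega) hn
    omega
  set N := q ^ n - 1 with hN
  haveI : NeZero N := ⟨by omega⟩
  set T : Finset ℕ := ((range n).powersetCard w).image (fun s => ∑ i ∈ s, q ^ i) with hT
  have hTsub : T ⊆ range N := by
    intro j hj
    obtain ⟨s, hs, rfl⟩ := Finset.mem_image.mp hj
    obtain ⟨hssub, hscard⟩ := Finset.mem_powersetCard.mp hs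
    rw [Finset.mem_range, hN]
    apply sum_pow_lt_pred hq (by omega) hssub
    rcases Nat.lt_or_ge q 3 with h3 | h3
    · right
      intro hcon
      have : s.card = n := by rw [hcon, Finset.card_range]
      exact hw2 (by omega) (by omega)
    · left; exact h3
  have hterm : ∀ j ∈ range N, (deltaFun q n w ((j : ℕ) : ZMod (q ^ n - 1)) : K) * ζ ^ j
      = if j ∈ T then ζ ^ j else 0 := by
    intro j hj
    have hjN : j < N := Finset.mem_range.mp hj
    have hval : ((j : ℕ) : ZMod (q ^ n - 1)).val = j := ZMod.val_cast_of_lt (by omega)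
    have hiff : inOmega q n w j ↔ j ∈ T := by
      rw [inOmega_iff, hT]
      constructor
      · rintro ⟨s, hs, rfl⟩
        exact Finset.mem_image.mpr ⟨s, hs, rfl⟩
      · intro h
        obtain ⟨s, hs, rfl⟩ := Finset.mem_image.mp h
        exact ⟨s, hs, rfl⟩
    unfold deltaFun
    rw [hval]
    split_ifs with h1 h2 h2
    · rw [one_mul]
    · exact absurd (hiff.mp h1) h2
    · exact absurd (hiff.mpr h2) h1
    · rw [zero_mul]
  rw [Finset.sum_congr rfl hterm]
  have h2 : ∑ j ∈ range N, (if j ∈ T then ζ ^ j else 0) = ∑ j ∈ T, ζ ^ j := by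
    rw [Finset.sum_ite_mem, Finset.inter_eq_right.mpr hTsub]
  rw [h2, hT]
  rw [Finset.sum_image]
  intro s hs t ht hst
  obtain ⟨hssub, _⟩ := Finset.mem_powersetCard.mp hs
  obtain ⟨htsub, _⟩ := Finset.mem_powersetCard.mp ht
  exact sum_pow_inj hq n s t hssub htsub hst

/-- Orthogonality of characters. -/
lemma orth {K : Type*} [Field K] {β : K} {N : ℕ} (hβ : IsPrimitiveRoot β N)
    (m : ℕ) : ∑ t ∈ range N, (β ^ m) ^ t = if N ∣ m then (N : K) else 0 := by
  by_cases h : N ∣ m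
  · have : β ^ m = 1 := by
      obtain ⟨c, rfl⟩ := h
      rw [pow_mul, hβ.pow_eq_one, one_pow]
    simp [this, h]
  · have hne : β ^ m ≠ 1 := by
      intro he
      exact h (hβ.pow_eq_one_iff_dvd m |>.mp he)
    have hgeom := geom_sum_mul (β ^ m) N
    have h2 : (β ^ m) ^ N - 1 = 0 := by
      rw [← pow_mul, mul_comm, pow_mul, hβ.pow_eq_one, one_pow, sub_self]
    rw [h2] at hgeom
    have h3 : β ^ m - 1 ≠ 0 := sub_ne_zero.mpr hne
    have := mul_eq_zero.mp hgeom
    simp only [if_neg h]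
    tauto

/-- Fourier inversion. -/
lemma fourier_inv {K : Type*} [Field K] {β : K} {N : ℕ} (hβ : IsPrimitiveRoot β N)
    (hN : 0 < N) (γ' : ℕ → K) {k : ℕ} (hk : k < N) :
    ∑ t ∈ range N, (∑ j ∈ range N, γ' j * (β ^ t) ^ j) * (β ^ t) ^ (N - k)
      = (N : K) * γ' k := by
  have h1 : ∀ t : ℕ, (∑ j ∈ range N, γ' j * (β ^ t) ^ j) * (β ^ t) ^ (N - k)
      = ∑ j ∈ range N, γ' j * (β ^ (j + (N - k))) ^ t := by
    intro t
    rw [Finset.sum_mul]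
    apply Finset.sum_congr rfl
    intro j _
    have hj : (β ^ t) ^ j = (β ^ j) ^ t := by rw [← pow_mul, mul_comm, pow_mul]
    have hk2 : (β ^ t) ^ (N - k) = (β ^ (N - k)) ^ t := by rw [← pow_mul, mul_comm, pow_mul]
    rw [pow_add, mul_pow, hj, hk2]; ring
  rw [Finset.sum_congr rfl (fun t _ => h1 t), Finset.sum_comm]
  have h2 : ∀ j ∈ range N, ∑ t ∈ range N, γ' j * (β ^ (j + (N - k))) ^ t
      = if j = k then γ' j * (N : K) else 0 := by
    intro j hj
    have hjN := Finset.mem_range.mp hj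
    rw [← Finset.mul_sum, orth hβ]
    by_cases hjk : j = k
    · subst hjk
      rw [if_pos (show N ∣ j + (N - j) by exact ⟨1, by omega⟩), if_pos rfl]
    · rw [if_neg ?hnd, if_neg hjk, mul_zero]
      case hnd =>
        rintro ⟨a, ha⟩
        rcases Nat.lt_or_ge a 2 with h' | h'
        · interval_cases a <;> omega
        · have h2 := Nat.mul_le_mul_left N h'
          omega
  rw [Finset.sum_congr rfl h2, Finset.sum_ite_eq' (range N) k (fun j => γ' j * (N : K)),
    if_pos (Finset.mem_range.mpr hk), mul_comm]

/-- Fixed points of `x ↦ x ^ |F|` in an `F`-algebra field lie in the image of `F`. -/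
lemma mem_range_of_pow_card {F K : Type*} [Field F] [Fintype F] [Field K] [Algebra F K]
    {x : K} (h : x ^ Fintype.card F = x) : x ∈ Set.range (algebraMap F K) := by
  classical
  set q := Fintype.card F with hq
  have hq1 : 1 < q := Fintype.one_lt_card
  set f : K[X] := X ^ q - X with hf
  have hroot : ∀ y : K, y ^ q = y → f.IsRoot y := by
    intro y hy
    simp [hf, IsRoot, hy]
  have hf0 : f ≠ 0 := FiniteField.X_pow_card_sub_X_ne_zero K hq1
  set S : Finset K := Finset.univ.image (algebraMap F K) with hS
  have hcardS : S.card = q := by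
    rw [hS, Finset.card_image_of_injective _ (algebraMap F K).injective, Finset.card_univ]
  by_contra hx
  have hxS : x ∉ S := by
    intro hmem
    obtain ⟨a, _, rfl⟩ := Finset.mem_image.mp hmem
    exact hx ⟨a, rfl⟩
  have hsub : (insert x S).val ⊆ f.roots := by
    intro y hy
    rw [Finset.insert_val_of_notMem hxS] at hy
    rw [Multiset.mem_cons] at hy
    rw [mem_roots hf0]
    rcases hy with rfl | hy
    · exact hroot y h
    · obtain ⟨a, _, rfl⟩ := Finset.mem_image.mp hy
      apply hroot
      rw [← map_pow, FiniteField.pow_card]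
  have hle := Polynomial.card_le_degree_of_subset_roots hsub
  rw [Finset.card_insert_of_notMem hxS, hcardS,
    FiniteField.X_pow_card_sub_X_natDegree_eq K hq1] at hle
  omega

variable {F K : Type*} [Field F] [Fintype F] [Field K] [IsAlgClosed K] [Algebra F K]

/-- The trace-like polynomial `Q = ∏ (X - ζ^{q^i})` descends to `F` and is the minimal
polynomial when `ζ` has degree `n`; otherwise `ζ` lies in a proper subfield. -/
lemma claim2 (c : F) (n : ℕ) (hn : 2 ≤ n) (W : Finset ℕ)
    (hW : W ⊆ Finset.range (n + 1)) (hq2 : Fintype.card F = 2 → n ∉ W)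
    (hcon : ∀ P : Polynomial F, P.Monic → Irreducible P → P.natDegree = n →
      (∑ w ∈ W.image (fun w => n - w), P.coeff w) = c)
    (M : ℕ) (hM : ∀ e ∈ n.properDivisors, Fintype.card F ^ e - 1 ∣ M)
    (ζ : K) (hζ : ζ ^ (Fintype.card F ^ n - 1) = 1) :
    ((∑ w ∈ W, (-1 : K) ^ w *
        (∑ s ∈ (range n).powersetCard w, ζ ^ (∑ i ∈ s, Fintype.card F ^ i)))
      - algebraMap F K c = 0) ∨ ζ ^ M = 1 := by
  classical
  set q := Fintype.card F with hq
  have hq1 : 1 < q := Fintype.one_lt_card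
  have hqn1 : 1 ≤ q ^ n := Nat.one_le_pow _ _ (by omega)
  have hqn3 : 3 ≤ q ^ n := by
    have h22 : (2:ℕ) ^ 2 ≤ q ^ 2 := Nat.pow_le_pow_left (by omega) 2
    have h2n : q ^ 2 ≤ q ^ n := Nat.pow_le_pow_right (by omega) hn
    omega
  have hζ0 : ζ ≠ 0 := by
    intro h0
    rw [h0, zero_pow (by omega)] at hζ
    exact zero_ne_one hζ
  have hFrob : ζ ^ q ^ n = ζ := by
    have : q ^ n = (q ^ n - 1) + 1 := by omega
    rw [this, pow_add, hζ, one_mul, pow_one]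
  -- the conjugates
  set r : ℕ → K := fun i => ζ ^ q ^ (i % n) with hr
  have hr0 : r 0 = ζ := by simp [hr, Nat.mod_eq_of_lt (by omega : 0 < n), pow_one]
  have hrsucc : ∀ i, (r i) ^ q = r (i + 1) := by
    intro i
    have him : i % n < n := Nat.mod_lt _ (by omega)
    have key : ∀ a b : ℕ, a < n → b = (a + 1) % n → (ζ ^ q ^ a) ^ q = ζ ^ q ^ b := by
      intro a b ha hb
      rcases Nat.lt_or_ge (a + 1) n with h | h
      · rw [hb, Nat.mod_eq_of_lt h, ← pow_mul, ← pow_succ]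
      · have han : a = n - 1 := by omega
        subst han
        have hb0 : b = 0 := by rw [hb, show n - 1 + 1 = n by omega, Nat.mod_self]
        rw [hb0, ← pow_mul, ← pow_succ, show n - 1 + 1 = n by omega, hFrob, pow_zero, pow_one]
    have hmod : (i + 1) % n = (i % n + 1) % n := by
      conv_lhs => rw [Nat.add_mod]
      rw [Nat.mod_eq_of_lt (show 1 < n by omega)]
    exact key (i % n) ((i + 1) % n) him hmod
  set Q : K[X] := ∏ i ∈ range n, (X - C (r i)) with hQ
  have hQmonic : Q.Monic := monic_prod_of_monic _ _ (fun i _ => monic_X_sub_C _)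
  have hQdeg : Q.natDegree = n := by
    rw [hQ, natDegree_prod _ _ (fun i _ => X_sub_C_ne_zero _)]
    simp
  -- char p setup
  set p := ringChar F with hp
  have hpp : p.Prime := CharP.char_is_prime F p
  haveI : Fact p.Prime := ⟨hpp⟩
  obtain ⟨m, -, hqpm⟩ := FiniteField.card F p
  haveI : CharP K p := charP_of_injective_algebraMap (algebraMap F K).injective p
  -- Frobenius fixes the coefficients of Q
  have hmapQ : Polynomial.map (iterateFrobenius K p m) Q = Q := by
    rw [hQ, Polynomial.map_prod]
    have hterm : ∀ i, Polynomial.map (iterateFrobenius K p m) (X - C (r i))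
        = X - C (r (i + 1)) := by
      intro i
      rw [Polynomial.map_sub, map_X, map_C, iterateFrobenius_def, ← hqpm, hrsucc]
    rw [Finset.prod_congr rfl (fun i _ => hterm i)]
    -- reindex i ↦ i+1 mod n
    refine Finset.prod_nbij' (fun i => (i + 1) % n) (fun i => (i + (n - 1)) % n)
      (fun a _ => Finset.mem_range.mpr (Nat.mod_lt _ (by omega)))
      (fun a _ => Finset.mem_range.mpr (Nat.mod_lt _ (by omega))) ?_ ?_ ?_
    · intro a ha
      rw [Finset.mem_range] at ha
      show ((a + 1) % n + (n - 1)) % n = a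
      rcases Nat.lt_or_ge (a + 1) n with h | h
      · rw [Nat.mod_eq_of_lt h, show a + 1 + (n - 1) = a + n by omega,
          Nat.add_mod_right, Nat.mod_eq_of_lt ha]
      · have han : a = n - 1 := by omega
        subst han
        rw [show n - 1 + 1 = n by omega, Nat.mod_self, zero_add,
          Nat.mod_eq_of_lt (by omega)]
    · intro a ha
      rw [Finset.mem_range] at ha
      show ((a + (n - 1)) % n + 1) % n = a
      rcases Nat.eq_zero_or_pos a with rfl | h
      · rw [zero_add, Nat.mod_eq_of_lt (show n - 1 < n by omega),
          show n - 1 + 1 = n by omega, Nat.mod_self]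
      · rw [show a + (n - 1) = (a - 1) + n by omega, Nat.add_mod_right,
          Nat.mod_eq_of_lt (show a - 1 < n by omega), show a - 1 + 1 = a by omega,
          Nat.mod_eq_of_lt ha]
    · intro a _
      show X - C (r (a + 1)) = X - C (r ((a + 1) % n))
      have : r (a + 1) = r ((a + 1) % n) := by
        rw [hr]
        simp only []
        rw [Nat.mod_mod_of_dvd _ (dvd_refl n)]
      rw [this]
  have hcoefffix : ∀ j, (Q.coeff j) ^ q = Q.coeff j := by
    intro j
    have := congrArg (fun P => Polynomial.coeff P j) hmapQ
    simpa [Polynomial.coeff_map, iterateFrobenius_def, ← hqpm] using this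
  have hlift : Q ∈ Polynomial.lifts (algebraMap F K) := by
    rw [Polynomial.lifts_iff_coeff_lifts]
    intro j
    exact mem_range_of_pow_card (hcoefffix j)
  obtain ⟨P', hP'map, hP'deg, hP'monic⟩ :=
    Polynomial.lifts_and_degree_eq_and_monic hlift hQmonic
  have hP'ndeg : P'.natDegree = n := by
    have := natDegree_eq_of_degree_eq hP'deg
    rw [this, hQdeg]
  have hQζ : Q.eval ζ = 0 := by
    rw [hQ, eval_prod]
    apply Finset.prod_eq_zero (Finset.mem_range.mpr (by omega : 0 < n))
    rw [eval_sub, eval_X, eval_C, hr0, sub_self]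
  have haevalP' : (Polynomial.aeval ζ) P' = 0 := by
    rw [Polynomial.aeval_def, ← Polynomial.eval_map, hP'map, hQζ]
  have hint : IsIntegral F ζ := ⟨P', hP'monic, haevalP'⟩
  have hminpolydvd : minpoly F ζ ∣ P' := minpoly.dvd F ζ haevalP'
  set d := (minpoly F ζ).natDegree with hd
  have hdpos : 0 < d := minpoly.natDegree_pos hint
  have hdn : d ≤ n := by
    rw [← hP'ndeg]
    exact Polynomial.natDegree_le_of_dvd hminpolydvd hP'monic.ne_zero
  by_cases hdeq : d = n
  · -- degree n: P' is the minimal polynomial, hence irreducible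
    left
    have hP'eq : P' = minpoly F ζ := by
      obtain ⟨u, hu⟩ := hminpolydvd
      have hu0 : u ≠ 0 := by
        intro h0; rw [h0, mul_zero] at hu; exact hP'monic.ne_zero hu
      have hdegu : u.natDegree = 0 := by
        have := hP'ndeg
        rw [hu, Polynomial.natDegree_mul (minpoly.ne_zero hint) hu0] at this
        omega
      have humonic : u.leadingCoeff = 1 := by
        have := hP'monic
        rw [Polynomial.Monic, hu, Polynomial.leadingCoeff_mul,
          (minpoly.monic hint).leadingCoeff, one_mul] at this
        exact this
      have : u = 1 := by
        rw [Polynomial.eq_C_of_natDegree_eq_zero hdegu] at humonic ⊢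
        rw [Polynomial.leadingCoeff_C] at humonic
        rw [humonic, map_one]
      rw [hu, this, mul_one]
    have hirr : Irreducible P' := hP'eq ▸ minpoly.irreducible hint
    have hsum := hcon P' hP'monic hirr hP'ndeg
    -- transfer to K
    have hWinj : Set.InjOn (fun w => n - w) W := by
      intro a ha b hb hab
      have ha' := Finset.mem_range.mp (hW ha)
      have hb' := Finset.mem_range.mp (hW hb)
      simp only at hab
      omega
    have hsum2 : ∑ w ∈ W, P'.coeff (n - w) = c := by
      rw [← hsum, Finset.sum_image (fun a ha b hb h => hWinj ha hb h)]
    have hmapsum := congrArg (algebraMap F K) hsum2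
    rw [map_sum] at hmapsum
    have hcoeffQ : ∀ w ∈ W, algebraMap F K (P'.coeff (n - w))
        = (-1 : K) ^ w * (∑ s ∈ (range n).powersetCard w, ζ ^ (∑ i ∈ s, q ^ i)) := by
      intro w hw
      have hwn : w ≤ n := by
        have := Finset.mem_range.mp (hW hw); omega
      have h1 : algebraMap F K (P'.coeff (n - w)) = Q.coeff (n - w) := by
        rw [← hP'map, Polynomial.coeff_map]
      rw [h1]
      have hQmult : Q = (Multiset.map (fun t => X - C t)
          (Multiset.map (fun i => r i) (range n).val)).prod := by
        rw [hQ, Finset.prod_eq_multiset_prod, Multiset.map_map]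
        rfl
      have hcard : Multiset.card (Multiset.map (fun i => r i) (range n).val) = n := by
        simp
      have hkn : n - w ≤ Multiset.card (Multiset.map (fun i => r i) (range n).val) := by
        rw [hcard]; omega
      rw [hQmult, Multiset.prod_X_sub_C_coeff _ hkn, hcard]
      have hnw : n - (n - w) = w := by omega
      rw [hnw, Finset.esymm_map_val]
      congr 1
      apply Finset.sum_congr rfl
      intro s hs
      obtain ⟨hssub, hscard⟩ := Finset.mem_powersetCard.mp hs
      rw [← Finset.prod_pow_eq_pow_sum]
      apply Finset.prod_congr rfl
      intro i hi
      have : i < n := Finset.mem_range.mp (hssub hi)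
      rw [hr]
      simp [Nat.mod_eq_of_lt this]
    rw [Finset.sum_congr rfl hcoeffQ] at hmapsum
    rw [hmapsum, sub_self]
  · -- degree < n : ζ lies in a proper subfield
    right
    have hdlt : d < n := lt_of_le_of_ne hdn hdeq
    -- ζ ^ (q ^ d) = ζ via the subfield F(ζ)
    have hsub : ζ ^ q ^ d = ζ := by
      set E := F⟮ζ⟯ with hE
      haveI : FiniteDimensional F E := IntermediateField.adjoin.finiteDimensional hint
      haveI : Finite E := Module.finite_of_finite F
      haveI : Fintype E := Fintype.ofFinite E
      have hcardE : Fintype.card E = q ^ d := by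
        rw [Module.card_eq_pow_finrank (K := F) (V := E), IntermediateField.adjoin.finrank hint]
      set ζE : E := ⟨ζ, IntermediateField.mem_adjoin_simple_self F ζ⟩ with hζE
      have := FiniteField.pow_card ζE
      rw [hcardE] at this
      have := congrArg (algebraMap E K) this
      rw [map_pow] at this
      simpa using this
    have hζqd : ζ ^ (q ^ d - 1) = 1 := by
      have hqd1 : 1 ≤ q ^ d := Nat.one_le_pow _ _ (by omega)
      have h1 : ζ ^ (q ^ d - 1) * ζ = ζ := by
        rw [← pow_succ]
        rw [show q ^ d - 1 + 1 = q ^ d by omega]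
        exact hsub
      have h2 : ζ ^ (q ^ d - 1) * ζ = 1 * ζ := by rw [one_mul]; exact h1
      exact mul_right_cancel₀ hζ0 h2
    -- order considerations
    set ord := orderOf ζ with hord
    have hfin : IsOfFinOrder ζ := isOfFinOrder_iff_pow_eq_one.mpr ⟨q ^ n - 1, by omega, hζ⟩
    have hordpos : 0 < ord := hfin.orderOf_pos
    have hordN : ord ∣ q ^ n - 1 := orderOf_dvd_of_pow_eq_one hζ
    have hordd : ord ∣ q ^ d - 1 := orderOf_dvd_of_pow_eq_one hζqd
    by_cases hord1 : ord = 1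
    · have : ζ = 1 := orderOf_eq_one_iff.mp hord1
      rw [this, one_pow]
    · haveI : NeZero ord := ⟨by omega⟩
      have hqd1 : 1 ≤ q ^ d := Nat.one_le_pow _ _ (by omega)
      have hu_d : (q : ZMod ord) ^ d = 1 := by
        have h0 : ((q ^ d - 1 : ℕ) : ZMod ord) = 0 :=
          (ZMod.natCast_eq_zero_iff _ _).mpr hordd
        rw [Nat.cast_sub hqd1] at h0
        push_cast at h0
        rw [sub_eq_zero] at h0
        exact h0
      have hu_n : (q : ZMod ord) ^ n = 1 := by
        have h0 : ((q ^ n - 1 : ℕ) : ZMod ord) = 0 :=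
          (ZMod.natCast_eq_zero_iff _ _).mpr hordN
        rw [Nat.cast_sub hqn1] at h0
        push_cast at h0
        rw [sub_eq_zero] at h0
        exact h0
      set e := orderOf ((q : ℕ) : ZMod ord) with he
      have hefin : IsOfFinOrder ((q : ℕ) : ZMod ord) :=
        isOfFinOrder_iff_pow_eq_one.mpr ⟨d, hdpos, hu_d⟩
      have hepos : 0 < e := hefin.orderOf_pos
      have he_d : e ∣ d := orderOf_dvd_iff_pow_eq_one.mpr hu_d
      have he_n : e ∣ n := orderOf_dvd_iff_pow_eq_one.mpr hu_n
      have he_lt : e < n := lt_of_le_of_lt (Nat.le_of_dvd hdpos he_d) hdlt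
      have heM : q ^ e - 1 ∣ M := hM e (Nat.mem_properDivisors.mpr ⟨he_n, he_lt⟩)
      have hordqe : ord ∣ q ^ e - 1 := by
        have hue : (q : ZMod ord) ^ e = 1 := pow_orderOf_eq_one _
        have hqe1 : 1 ≤ q ^ e := Nat.one_le_pow _ _ (by omega)
        have h0 : ((q ^ e - 1 : ℕ) : ZMod ord) = 0 := by
          rw [Nat.cast_sub hqe1]
          push_cast
          rw [hue, sub_self]
        exact (ZMod.natCast_eq_zero_iff _ _).mp h0
      exact orderOf_dvd_iff_pow_eq_one.mp (hordqe.trans heM)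

end AuxNT
end Aux

set_option maxHeartbeats 1000000 in
open Polynomial Finset in
theorem exists_irreducible_sum_ne
    {F : Type*} [Field F] [Fintype F] (c : F) (n : ℕ) (hn : 2 ≤ n)
    (W : Finset ℕ) (hW : W ⊆ Finset.range (n + 1))
    (hq2 : Fintype.card F = 2 → n ∉ W)
    (hper : ¬ ((leastPeriod (fun k : ZMod (Fintype.card F ^ n - 1) =>
        (∑ w ∈ W, (-1 : F) ^ w * deltaFun (Fintype.card F) n w k) -
          c * deltaFun (Fintype.card F) n 0 k) : ℤ) ∣
        ((Fintype.card F : ℤ) ^ n - 1) / (Polynomial.cyclotomic n ℤ).eval (Fintype.card F : ℤ))) :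
    ∃ P : Polynomial F, P.Monic ∧ Irreducible P ∧ P.natDegree = n ∧
      (∑ w ∈ W.image (fun w => n - w), P.coeff w) ≠ c := by
  classical
  by_contra hcon
  push_neg at hcon
  apply hper
  set q := Fintype.card F with hq
  have hq1 : 1 < q := Fintype.one_lt_card
  have hqn1 : 1 ≤ q ^ n := Nat.one_le_pow _ _ (by omega)
  have hqn4 : 4 ≤ q ^ n := by
    have h22 : (2:ℕ) ^ 2 ≤ q ^ 2 := Nat.pow_le_pow_left (by omega) 2
    have h2n : q ^ 2 ≤ q ^ n := Nat.pow_le_pow_right (by omega) hn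
    omega
  set N := q ^ n - 1 with hN
  haveI : NeZero N := ⟨by omega⟩
  set Φ : ℤ := (Polynomial.cyclotomic n ℤ).eval (q : ℤ) with hΦ
  have hΦpos : 0 < Φ := Polynomial.cyclotomic_pos' n (by exact_mod_cast hq1)
  have hNZ : ((N : ℕ) : ℤ) = (q : ℤ) ^ n - 1 := by
    rw [hN]; push_cast [hqn1]; ring
  have hΦdvd : Φ ∣ ((N : ℕ) : ℤ) := by
    rw [hNZ]
    have h := Polynomial.cyclotomic.dvd_X_pow_sub_one n ℤ
    have h2 := Polynomial.eval_dvd (p := cyclotomic n ℤ) (q := X ^ n - 1) (x := (q : ℤ)) h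
    simpa using h2
  have hΦtoNat : ((Φ.toNat : ℕ) : ℤ) = Φ := Int.toNat_of_nonneg hΦpos.le
  have hΦtnDvd : Φ.toNat ∣ N := by
    have h3 : ((Φ.toNat : ℕ) : ℤ) ∣ ((N : ℕ) : ℤ) := by rw [hΦtoNat]; exact hΦdvd
    exact_mod_cast h3
  set M := N / Φ.toNat with hM
  have hMmul : Φ.toNat * M = N := Nat.mul_div_cancel' hΦtnDvd
  have hMpos : 0 < M := Nat.pos_of_ne_zero (fun h0 => by rw [h0, mul_zero] at hMmul; omega)
  have hNM : ((q : ℤ) ^ n - 1) = Φ * (M : ℕ) := by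
    rw [← hNZ, ← hMmul]; push_cast [hΦtoNat]; ring
  have hMz : (M : ℤ) = ((q : ℤ) ^ n - 1) / Φ := by
    rw [hNM, Int.mul_ediv_cancel_left _ hΦpos.ne']
  have hNT : ∀ e ∈ n.properDivisors, q ^ e - 1 ∣ M := by
    intro e he
    have hdvd2 : ((X : ℤ[X]) ^ e - 1) * cyclotomic n ℤ ∣ (X : ℤ[X]) ^ n - 1 :=
      Polynomial.X_pow_sub_one_mul_cyclotomic_dvd_X_pow_sub_one_of_dvd ℤ he
    have h3 := Polynomial.eval_dvd (x := (q : ℤ)) hdvd2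
    simp only [eval_mul, eval_sub, eval_pow, eval_X, eval_one] at h3
    rw [← hΦ, ← hNZ] at h3
    rw [← hNZ] at hNM
    rw [hNM] at h3
    have h5 : ((q : ℤ) ^ e - 1) * Φ ∣ (M : ℕ) * Φ := by
      rwa [mul_comm Φ ((M : ℕ) : ℤ)] at h3
    have h6 : ((q : ℤ) ^ e - 1) ∣ ((M : ℕ) : ℤ) :=
      (mul_dvd_mul_iff_right hΦpos.ne').mp h5
    have hqe1 : 1 ≤ q ^ e := Nat.one_le_pow _ _ (by omega)
    have h7 : (((q ^ e - 1 : ℕ) : ℤ)) ∣ ((M : ℕ) : ℤ) := by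
      convert h6 using 1
      push_cast [hqe1]; ring
    exact_mod_cast h7
  set γ : ZMod (q ^ n - 1) → F := fun k =>
    (∑ w ∈ W, (-1 : F) ^ w * deltaFun q n w k) - c * deltaFun q n 0 k with hγ
  suffices hsuff : IsPeriodicZMod γ M by
    have hdvd := AuxNT.leastPeriod_dvd hMpos hsuff
    rw [← hMz]
    exact_mod_cast hdvd
  -- now the analytic part, in the algebraic closure
  set K := AlgebraicClosure F with hK
  have hqK : ((q : ℕ) : K) = 0 := by
    have h1 : ((q : ℕ) : F) = 0 := FiniteField.cast_card_eq_zero F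
    calc ((q : ℕ) : K) = algebraMap F K ((q : ℕ) : F) := (map_natCast _ _).symm
      _ = 0 := by rw [h1, map_zero]
  have hNK : ((N : ℕ) : K) = -1 := by
    have h1 : ((N : ℕ) : K) = ((q : ℕ) : K) ^ n - 1 := by
      rw [hN]; push_cast [hqn1]; ring
    rw [h1, hqK, zero_pow (by omega : n ≠ 0), zero_sub]
  haveI : NeZero ((N : ℕ) : K) := ⟨by rw [hNK]; norm_num⟩
  obtain ⟨β, hβ⟩ := HasEnoughRootsOfUnity.exists_primitiveRoot K N
  have hβN : β ^ N = 1 := hβ.pow_eq_one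
  have hbpow : ∀ a b : ℕ, a % N = b % N → β ^ a = β ^ b := by
    intro a b hab
    calc β ^ a = β ^ (a % orderOf β) := (pow_mod_orderOf β a).symm
      _ = β ^ (b % orderOf β) := by rw [← hβ.eq_orderOf, hab]
      _ = β ^ b := pow_mod_orderOf β b
  set γ' : ℕ → K := fun j => algebraMap F K (γ ((j : ℕ) : ZMod (q ^ n - 1))) with hγ'
  have hfourier : ∀ ζ : K, ζ ^ N = 1 →
      ∑ j ∈ range N, γ' j * ζ ^ j
        = (∑ w ∈ W, (-1 : K) ^ w *
            (∑ s ∈ (range n).powersetCard w, ζ ^ (∑ i ∈ s, q ^ i)))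
          - algebraMap F K c := by
    intro ζ hζ
    have hexp : ∀ j : ℕ, γ' j
        = (∑ w ∈ W, (-1 : K) ^ w * (deltaFun q n w ((j : ℕ) : ZMod (q ^ n - 1)) : K))
          - algebraMap F K c * (deltaFun q n 0 ((j : ℕ) : ZMod (q ^ n - 1)) : K) := by
      intro j
      rw [hγ', hγ]
      simp only [map_sub, map_sum, map_mul, map_pow, map_neg, map_one,
        AuxNT.deltaFun_map]
    have hWcond : ∀ w ∈ W, w ≤ n ∧ (q = 2 → w ≠ n) := by
      intro w hw
      refine ⟨by have := Finset.mem_range.mp (hW hw); omega, fun h2 hwn => ?_⟩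
      exact hq2 h2 (hwn ▸ hw)
    calc ∑ j ∈ range N, γ' j * ζ ^ j
        = ∑ j ∈ range N,
            ((∑ w ∈ W, (-1 : K) ^ w * ((deltaFun q n w ((j : ℕ) : ZMod (q ^ n - 1)) : K) * ζ ^ j))
              - algebraMap F K c * ((deltaFun q n 0 ((j : ℕ) : ZMod (q ^ n - 1)) : K) * ζ ^ j)) := by
          apply Finset.sum_congr rfl
          intro j _
          rw [hexp j, sub_mul, Finset.sum_mul]
          congr 1
          · apply Finset.sum_congr rfl
            intro w _
            ring
          · ring
      _ = (∑ j ∈ range N, ∑ w ∈ W,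
              (-1 : K) ^ w * ((deltaFun q n w ((j : ℕ) : ZMod (q ^ n - 1)) : K) * ζ ^ j))
            - algebraMap F K c *
              ∑ j ∈ range N, (deltaFun q n 0 ((j : ℕ) : ZMod (q ^ n - 1)) : K) * ζ ^ j := by
          rw [Finset.sum_sub_distrib, Finset.mul_sum]
      _ = (∑ w ∈ W, (-1 : K) ^ w *
              ∑ j ∈ range N, (deltaFun q n w ((j : ℕ) : ZMod (q ^ n - 1)) : K) * ζ ^ j)
            - algebraMap F K c *
              ∑ j ∈ range N, (deltaFun q n 0 ((j : ℕ) : ZMod (q ^ n - 1)) : K) * ζ ^ j := by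
          rw [Finset.sum_comm]
          congr 1
          apply Finset.sum_congr rfl
          intro w _
          rw [Finset.mul_sum]
      _ = (∑ w ∈ W, (-1 : K) ^ w *
            (∑ s ∈ (range n).powersetCard w, ζ ^ (∑ i ∈ s, q ^ i)))
          - algebraMap F K c := by
          congr 1
          · apply Finset.sum_congr rfl
            intro w hw
            obtain ⟨hw1, hw2'⟩ := hWcond w hw
            rw [AuxNT.indicator_sum (by omega) hn hw1 hw2' ζ]
          · rw [AuxNT.indicator_sum (by omega) hn (by omega) (fun _ => by omega) ζ]
            rw [Finset.powersetCard_zero, Finset.sum_singleton, Finset.sum_empty, pow_zero,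
              mul_one]
  have hvanish : ∀ t : ℕ,
      (∑ j ∈ range N, γ' j * (β ^ t) ^ j) = 0 ∨ (β ^ t) ^ M = 1 := by
    intro t
    have hβtN : (β ^ t) ^ N = 1 := by
      rw [← pow_mul, mul_comm, pow_mul, hβN, one_pow]
    have h2 := AuxNT.claim2 c n hn W hW hq2 hcon M hNT (β ^ t) hβtN
    rcases h2 with h2 | h2
    · left
      rw [hfourier (β ^ t) hβtN]
      exact h2
    · right; exact h2
  have hstep : ∀ k, k < N → γ' ((k + M) % N) = γ' k := by
    intro k hk
    have hk' : (k + M) % N < N := Nat.mod_lt _ (by omega)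
    have h1 := AuxNT.fourier_inv hβ (by omega) γ' hk'
    have h2 := AuxNT.fourier_inv hβ (by omega) γ' hk
    have hterm : ∀ t ∈ range N,
        (∑ j ∈ range N, γ' j * (β ^ t) ^ j) * (β ^ t) ^ (N - (k + M) % N)
          = (∑ j ∈ range N, γ' j * (β ^ t) ^ j) * (β ^ t) ^ (N - k) := by
      intro t _
      rcases hvanish t with hz | hp
      · rw [hz, zero_mul, zero_mul]
      · have hmm : (β ^ t) ^ (N - (k + M) % N) * (β ^ t) ^ M = (β ^ t) ^ (N - k) := by
          rw [← pow_add, ← pow_mul, ← pow_mul]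
          apply hbpow
          have hdm : N * ((k + M) / N) + (k + M) % N = k + M := Nat.div_add_mod _ _
          have hmod : (N - (k + M) % N + M) % N = (N - k) % N := by
            have h5 : N - (k + M) % N + M = (N - k) + N * ((k + M) / N) := by omega
            rw [h5, Nat.add_mul_mod_self_left]
          exact Nat.ModEq.mul_left t hmod
        calc (∑ j ∈ range N, γ' j * (β ^ t) ^ j) * (β ^ t) ^ (N - (k + M) % N)
            = (∑ j ∈ range N, γ' j * (β ^ t) ^ j) *
                ((β ^ t) ^ (N - (k + M) % N) * (β ^ t) ^ M) := by
              rw [hp, mul_one]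
          _ = (∑ j ∈ range N, γ' j * (β ^ t) ^ j) * (β ^ t) ^ (N - k) := by rw [hmm]
    have h3 : (N : K) * γ' ((k + M) % N) = (N : K) * γ' k := by
      rw [← h1, ← h2]
      exact Finset.sum_congr rfl hterm
    have hNne : ((N : ℕ) : K) ≠ 0 := by rw [hNK]; norm_num
    exact mul_left_cancel₀ hNne h3
  intro i
  have hi : i.val < N := ZMod.val_lt i
  have hs := hstep i.val hi
  have hcast1 : (((i.val + M) % N : ℕ) : ZMod (q ^ n - 1)) = i + (M : ZMod (q ^ n - 1)) := by
    have h1 : (((i.val + M) % N : ℕ) : ZMod (q ^ n - 1)) = ((i.val + M : ℕ) : ZMod (q ^ n - 1)) :=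
      ZMod.natCast_mod (i.val + M) N
    rw [h1]
    push_cast
    rw [ZMod.natCast_rightInverse i]
  have hcast2 : ((i.val : ℕ) : ZMod (q ^ n - 1)) = i := ZMod.natCast_rightInverse i
  have hs2 : algebraMap F K (γ (i + (M : ZMod (q ^ n - 1)))) = algebraMap F K (γ i) := by
    simpa only [hγ', hcast1, hcast2] using hs
  exact (algebraMap F K).injective hs2
end

section
/- Let q be a prime power, c ∈ F_q, n ≥ 2, W ⊆ {0,...,n} (with n ∉ W if q = 2). If the least period of Δ_{W,c} = δ_0 − (Σ_{w ∈ W} (−1)^w δ_w − c δ_0)^{⊗(q−1)} on Z/(q^n−1)Z does not divide (q^n−1)/Φ_n(q), then there exists a monic irreducible polynomial P of degree n over F_q such that Σ_{w ∈ n−W} [x^w]P(x) = c. -/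
/-- Convolution on `ℤ/Nℤ`: `(f ⊗ g)(i) = ∑_{j+k=i} f(j) g(k)`. -/
def conv {F : Type*} [CommRing F] (N : ℕ) (f g : ZMod N → F) (i : ZMod N) : F :=
  ∑ j ∈ Finset.range N, f (j : ZMod N) * g (i - (j : ZMod N))

/-- `convPow N f m` is the `m`-th convolution power `f^{⊗m}` of `f`,
with `f^{⊗0} = δ₀` the Kronecker delta (the convolution identity). -/
def convPow {F : Type*} [CommRing F] (N : ℕ) (f : ZMod N → F) : ℕ → (ZMod N → F)
  | 0 => fun i => if i = 0 then 1 else 0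
  | m + 1 => conv N f (convPow N f m)

/-!
Work in the field `K` with `q ^ n` elements and transform functions on `ℤ/(qⁿ-1)ℤ` by
`f ↦ ∑ₖ f(k) bᵏ` for `b ∈ Kˣ`. This turns convolution into multiplication. The transform of
`δ_w` at `b` is the elementary symmetric function `e_w(b, b^q, …, b^{q^{n-1}})`. Here the
exception `q = 2`, `w = n` is needed, since `1 + 2 + ⋯ + 2ⁿ⁻¹ ≡ 0`. So the transform of
`∑_{w ∈ W} (-1)^w δ_w - c δ₀` is `y = ∑_{w ∈ W} [x^{n-w}] P_b - c`, where
`P_b = ∏ₜ (X - b^{qᵗ})`, and `y` lies in `𝔽_q`. The transform of `Δ_{W,c}` is then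
`1 - y^{q-1}`, which is nonzero exactly when `y = 0`.

If `Δ_{W,c}` is not periodic with period `M = (qⁿ-1)/Φₙ(q)`, Fourier inversion gives a `b` at
which this transform does not vanish and `b ^ M ≠ 1`. Since `q^m - 1 ∣ M` for every proper
divisor `m` of `n`, such a `b` lies in no proper subfield. Hence `P_b` is its minimal
polynomial: it is irreducible of degree `n`, and its coefficients satisfy `y = 0`.
-/

open Finset Polynomial

theorem leastPeriod_dvd {N : ℕ} [NeZero N] {α : Type*} {f : ZMod N → α} {r : ℕ}
    (hr : IsPeriodicZMod f r) : leastPeriod f ∣ r := by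
  have hN : N ∈ {r : ℕ | 0 < r ∧ IsPeriodicZMod f r} :=
    ⟨Nat.pos_of_ne_zero (NeZero.ne N), fun i => by simp⟩
  obtain ⟨hLpos, hL⟩ : leastPeriod f ∈ {r : ℕ | 0 < r ∧ IsPeriodicZMod f r} :=
    Nat.sInf_mem ⟨N, hN⟩
  set L := leastPeriod f
  have hmod : IsPeriodicZMod f (r % L) := by
    intro i
    have hr' : (r : ZMod N) = (r % L : ℕ) + (r / L) • (L : ZMod N) := by
      rw [nsmul_eq_mul, ← Nat.cast_mul, ← Nat.cast_add, mul_comm, Nat.mod_add_div]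
    rw [← Function.Periodic.nsmul hL (r / L) (i + _), add_assoc, ← hr', hr]
  by_contra hdvd
  have hpos : 0 < r % L := Nat.pos_of_ne_zero (mt Nat.dvd_of_mod_eq_zero hdvd)
  exact (Nat.mod_lt r hLpos).not_ge (Nat.sInf_le ⟨hpos, hmod⟩)

theorem map_convPow {R S : Type*} [CommRing R] [CommRing S] {N : ℕ} (φ : R →+* S)
    (f : ZMod N → R) (m : ℕ) :
    (fun k => φ (convPow N f m k)) = convPow N (fun k => φ (f k)) m := by
  induction m with
  | zero => funext k; simp [convPow, apply_ite φ]
  | succ m ih => funext k; simp [convPow, conv, ← ih]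

section DFT

variable {R : Type*} [CommRing R] {N : ℕ} [NeZero N]

theorem sum_range_natCast_eq_sum_zmod {M : Type*} [AddCommMonoid M] (f : ZMod N → M) :
    ∑ j ∈ range N, f j = ∑ k : ZMod N, f k :=
  sum_nbij' (fun j => (j : ZMod N)) ZMod.val (by simp) (by simp [ZMod.val_lt])
    (fun j hj => ZMod.val_cast_of_lt (mem_range.mp hj)) (fun k _ => ZMod.natCast_zmod_val k)
    (fun _ _ => rfl)

theorem conv_apply (f g : ZMod N → R) (i : ZMod N) :
    conv N f g i = ∑ j : ZMod N, f j * g (i - j) :=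
  sum_range_natCast_eq_sum_zmod (fun j => f j * g (i - j))

def dft (b : R) : (ZMod N → R) →ₗ[R] R where
  toFun f := ∑ k, f k * b ^ k.val
  map_add' f g := by simp [add_mul, sum_add_distrib]
  map_smul' a f := by simp [mul_sum, mul_assoc]

theorem dft_apply (b : R) (f : ZMod N → R) : dft b f = ∑ k, f k * b ^ k.val := rfl

theorem dft_single_zero (b : R) : dft b (fun k : ZMod N => if k = 0 then 1 else 0) = 1 := by
  simp [dft_apply]

theorem eq_zero_of_dft_eq_zero [IsDomain R] {f : ZMod N → R} (s : Finset R) (hs : N ≤ #s)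
    (h : ∀ b ∈ s, dft b f = 0) : f = 0 := by
  let p : R[X] := ∑ k : ZMod N, C (f k) * X ^ k.val
  have hdeg : p.natDegree < #s := by
    refine lt_of_le_of_lt (natDegree_sum_le_of_forall_le _ _ (n := N - 1) fun k _ => ?_) ?_
    · exact natDegree_C_mul_X_pow_le _ _ |>.trans (Nat.le_sub_one_of_lt (ZMod.val_lt k))
    · have := NeZero.ne N; omega
  have hp : p = 0 := eq_zero_of_natDegree_lt_card_of_eval_eq_zero' p s
    (fun b hb => by simpa [p, eval_finsetSum, dft_apply] using h b hb) hdeg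
  funext k
  simpa [p, finsetSum_coeff, coeff_C_mul_X_pow, (ZMod.val_injective N).eq_iff] using
    congrArg (coeff · k.val) hp

section RootOfUnity

variable {b : R} (hb : b ^ N = 1)
include hb

theorem dft_conv (f g : ZMod N → R) : dft b (conv N f g) = dft b f * dft b g := by
  let ψ := AddChar.zmodChar N hb
  have hψ (k : ZMod N) : b ^ k.val = ψ k := (AddChar.zmodChar_apply hb k).symm
  simp only [dft_apply, hψ, conv_apply, sum_mul]
  rw [sum_comm]
  refine sum_congr rfl fun j _ => ?_
  rw [mul_sum]
  exact (Fintype.sum_equiv (Equiv.addLeft j) _ _ fun k => by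
    simp [AddChar.map_add_eq_mul]; ring).symm

theorem dft_convPow (f : ZMod N → R) (m : ℕ) : dft b (convPow N f m) = dft b f ^ m := by
  induction m with
  | zero => rw [pow_zero]; exact dft_single_zero b
  | succ m ih => rw [convPow, dft_conv hb, ih, pow_succ']

theorem dft_map_sub_convPow {S : Type*} [CommRing S] (φ : S →+* R) (g : ZMod N → S) (m : ℕ) :
    dft b (fun k => φ ((if k = 0 then 1 else 0) - convPow N g m k)) =
      1 - dft b (fun k => φ (g k)) ^ m := by
  have h : (fun k => φ ((if k = 0 then 1 else 0) - convPow N g m k)) =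
      (fun k => if k = 0 then 1 else 0) - convPow N (fun k => φ (g k)) m := by
    rw [← map_convPow]
    funext k
    simp [apply_ite φ]
  rw [h, map_sub, dft_single_zero, dft_convPow hb]

theorem dft_comp_add_mul_pow (f : ZMod N → R) (M : ℕ) :
    dft b (fun k : ZMod N => f (k + M)) * b ^ M = dft b f := by
  let ψ := AddChar.zmodChar N hb
  have hψ (k : ZMod N) : b ^ k.val = ψ k := (AddChar.zmodChar_apply hb k).symm
  rw [← AddChar.zmodChar_apply' hb M]
  simp only [dft_apply, hψ, sum_mul, mul_assoc]
  exact Fintype.sum_equiv (Equiv.addRight (M : ZMod N)) _ _ fun k => by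
    rw [Equiv.coe_addRight, AddChar.map_add_eq_mul]

end RootOfUnity

/-- Multiplying the transform of `f` at `b` by `b ^ M - 1` gives that of `f (· + M) - f`, so if `f`
is not `M`-periodic, Fourier inversion over the `N` nonzero elements finds a `b` at which neither
factor vanishes. -/
theorem exists_dft_ne_zero_of_not_isPeriodicZMod {K : Type*} [Field K] [Fintype K]
    (hK : Fintype.card K = N + 1) {f : ZMod N → K} {M : ℕ} (hf : ¬ IsPeriodicZMod f M) :
    ∃ b : K, b ≠ 0 ∧ b ^ M ≠ 1 ∧ dft b f ≠ 0 := by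
  classical
  by_contra! h
  apply hf
  suffices hshift : (fun k : ZMod N => f (k + M)) - f = 0 from
    fun i => sub_eq_zero.mp (congrFun hshift i)
  refine eq_zero_of_dft_eq_zero (univ.erase 0) (by simp [hK]) fun b hb => ?_
  have hb0 : b ≠ 0 := ne_of_mem_erase hb
  have hbN : b ^ N = 1 := by simpa [hK] using FiniteField.pow_card_sub_one_eq_one b hb0
  apply mul_right_cancel₀ (pow_ne_zero M hb0)
  rw [map_sub, sub_mul, dft_comp_add_mul_pow hbN, zero_mul]
  by_cases hbM : b ^ M = 1
  · rw [hbM, mul_one, sub_self]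
  · rw [h b hb0 hbM, zero_mul, sub_zero]

end DFT

section Omega

theorem one_lt_and_ne_zero_of_pow_sub_one_ne_zero {q n : ℕ} (h : q ^ n - 1 ≠ 0) :
    1 < q ∧ n ≠ 0 := by
  have h1 : 1 < q ^ n := by omega
  have hn : n ≠ 0 := by rintro rfl; simp at h1
  exact ⟨(one_lt_pow_iff hn).1 h1, hn⟩

theorem sum_pow_lt_pow_sub_one {q n : ℕ} (hq : 2 ≤ q) (hn : n ≠ 0) {s : Finset ℕ}
    (hs : s ⊆ range n) (hqs : q = 2 → s ≠ range n) : ∑ i ∈ s, q ^ i < q ^ n - 1 := by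
  have hgeom : (∑ i ∈ range n, q ^ i) * (q - 1) + 1 = q ^ n := by
    simpa [Nat.sub_add_cancel (by omega : 1 ≤ q)] using geom_sum_mul_add (q - 1) n
  have hpos : 0 < ∑ i ∈ range n, q ^ i :=
    sum_pos (fun _ _ => by positivity) (nonempty_range_iff.mpr hn)
  rcases eq_or_ne s (range n) with rfl | hne
  · have h3 : 3 ≤ q := by grind
    have : 2 * ∑ i ∈ range n, q ^ i ≤ (∑ i ∈ range n, q ^ i) * (q - 1) := by
      rw [mul_comm]; exact Nat.mul_le_mul_left _ (by omega)
    omega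
  · obtain ⟨j, hj, hjs⟩ := exists_of_ssubset (ssubset_of_subset_of_ne hs hne)
    have hlt : ∑ i ∈ s, q ^ i < ∑ i ∈ range n, q ^ i :=
      sum_lt_sum_of_subset hs hj hjs (by positivity) (fun _ _ _ => Nat.zero_le _)
    have : ∑ i ∈ range n, q ^ i ≤ (∑ i ∈ range n, q ^ i) * (q - 1) :=
      Nat.le_mul_of_pos_right _ (by omega)
    omega

theorem map_valEmbedding_univ_eq_range (n : ℕ) :
    (univ : Finset (Fin n)).map Fin.valEmbedding = range n := by
  rw [Fin.map_valEmbedding_univ, Nat.Iio_eq_range]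

theorem sum_pow_val_lt_pow_sub_one {q n : ℕ} (h : q ^ n - 1 ≠ 0) {s : Finset (Fin n)}
    (hs : q = 2 → s ≠ univ) : ∑ i ∈ s, q ^ (i : ℕ) < q ^ n - 1 := by
  obtain ⟨hq, hn⟩ := one_lt_and_ne_zero_of_pow_sub_one_ne_zero h
  rw [show ∑ i ∈ s, q ^ (i : ℕ) = ∑ i ∈ s.map Fin.valEmbedding, q ^ i by simp]
  refine sum_pow_lt_pow_sub_one hq hn ?_ fun h2 hsu =>
    hs h2 (Finset.map_injective Fin.valEmbedding ?_)
  · rw [← map_valEmbedding_univ_eq_range]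
    exact map_subset_map.mpr (subset_univ s)
  · rwa [map_valEmbedding_univ_eq_range]

theorem map_deltaFun {R S : Type*} [CommRing R] [CommRing S] (φ : R →+* S) (q n w : ℕ)
    (k : ZMod (q ^ n - 1)) : φ (deltaFun q n w k) = deltaFun q n w k := by
  simp [deltaFun, apply_ite φ]

theorem dft_deltaFun {R : Type*} [CommRing R] {q n w : ℕ} [NeZero (q ^ n - 1)]
    (hqw : q = 2 → w ≠ n) (b : R) :
    dft b (deltaFun q n w) = ∑ s ∈ (range n).powersetCard w, b ^ ∑ i ∈ s, q ^ i := by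
  classical
  have hq := (one_lt_and_ne_zero_of_pow_sub_one_ne_zero (NeZero.ne (q ^ n - 1))).1
  let σ : Finset (Fin n) → ℕ := fun s => ∑ i ∈ s, q ^ (i : ℕ)
  have hσ_lt {s : Finset (Fin n)} (hs : s ∈ univ.powersetCard w) : σ s < q ^ n - 1 :=
    sum_pow_val_lt_pow_sub_one (NeZero.ne _) fun h2 hsu => hqw h2 <| by
      rw [← (mem_powersetCard.1 hs).2, hsu, card_univ, Fintype.card_fin]
  have hfilter : univ.filter (fun k : ZMod (q ^ n - 1) => inOmega q n w k.val) =
      (univ.powersetCard w).image (fun s => (σ s : ZMod (q ^ n - 1))) := by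
    ext k
    simp only [mem_filter, mem_univ, true_and, mem_image]
    constructor
    · rintro ⟨s, hs, hk⟩
      exact ⟨s, by simpa using hs, by rw [← ZMod.natCast_zmod_val k, hk]⟩
    · rintro ⟨s, hs, rfl⟩
      exact ⟨s, (mem_powersetCard.1 hs).2, ZMod.val_cast_of_lt (hσ_lt hs)⟩
  have hinj : Set.InjOn (fun s => (σ s : ZMod (q ^ n - 1)))
      ↑((univ : Finset (Fin n)).powersetCard w) := by
    intro s hs t ht hst
    have h : σ s = σ t := by
      rw [← ZMod.val_cast_of_lt (hσ_lt hs), ← ZMod.val_cast_of_lt (hσ_lt ht)]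
      exact congrArg ZMod.val hst
    have hσ (u : Finset (Fin n)) : σ u = ∑ i ∈ u.map Fin.valEmbedding, q ^ i := by simp [σ]
    rw [hσ, hσ] at h
    exact Finset.map_injective Fin.valEmbedding (geomSum_injective hq h)
  calc dft b (deltaFun q n w)
      = ∑ k ∈ univ.filter (fun k : ZMod (q ^ n - 1) => inOmega q n w k.val), b ^ k.val := by
        rw [dft_apply, sum_filter]
        simp [deltaFun]
    _ = ∑ s ∈ univ.powersetCard w, b ^ σ s := by
        rw [hfilter, sum_image hinj]
        exact sum_congr rfl fun s hs => by rw [ZMod.val_cast_of_lt (hσ_lt hs)]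
    _ = ∑ s ∈ (range n).powersetCard w, b ^ ∑ i ∈ s, q ^ i := by
        rw [← map_valEmbedding_univ_eq_range, powersetCard_map, sum_map]
        simp [σ]

end Omega

theorem exists_natCast_eq_div_cyclotomic {q : ℕ} (hq : 1 < q) (n : ℕ) :
    ∃ M : ℕ, (M : ℤ) = ((q : ℤ) ^ n - 1) / (cyclotomic n ℤ).eval (q : ℤ) ∧
      ∀ m ∈ n.properDivisors, q ^ m - 1 ∣ M := by
  have hΦ : 0 < (cyclotomic n ℤ).eval (q : ℤ) := cyclotomic_pos' n (by exact_mod_cast hq)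
  have hpow (m : ℕ) : ((q ^ m - 1 : ℕ) : ℤ) = (q : ℤ) ^ m - 1 := by
    rw [Nat.cast_sub (Nat.one_le_pow _ _ (by omega)), Nat.cast_pow, Nat.cast_one]
  obtain ⟨M, hM⟩ :=
    Int.eq_ofNat_of_zero_le (Int.ediv_nonneg (hpow n ▸ Int.natCast_nonneg _) hΦ.le)
  refine ⟨M, hM.symm, fun m hm => ?_⟩
  rw [← Int.natCast_dvd_natCast, ← hM, hpow]
  apply Int.dvd_div_of_mul_dvd
  rw [mul_comm]
  simpa using
    map_dvd (evalRingHom (q : ℤ)) (X_pow_sub_one_mul_cyclotomic_dvd_X_pow_sub_one_of_dvd ℤ hm)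

theorem coeff_prod_X_sub_C {R ι : Type*} [CommRing R] (s : Finset ι) (v : ι → R) {k : ℕ}
    (hk : k ≤ #s) :
    (∏ i ∈ s, (X - C (v i))).coeff (#s - k) =
      (-1) ^ k * ∑ t ∈ s.powersetCard k, ∏ i ∈ t, v i := by
  have h := prod_X_add_C_coeff s (fun i => -v i) (k := #s - k) (Nat.sub_le _ _)
  simp only [map_neg, ← sub_eq_add_neg, Nat.sub_sub_self hk, prod_neg] at h
  rw [h, mul_sum]
  exact sum_congr rfl fun t ht => by rw [(mem_powersetCard.1 ht).2]

theorem exists_extension_card_eq (F : Type*) [Field F] [Fintype F] {n : ℕ} (hn : n ≠ 0) :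
    ∃ (K : Type) (_ : Field K) (_ : Fintype K) (_ : Algebra F K),
      Fintype.card K = Fintype.card F ^ n ∧ Module.finrank F K = n := by
  obtain ⟨p, _⟩ := CharP.exists F
  have : Fact p.Prime := ⟨CharP.char_is_prime F p⟩
  have : NeZero n := ⟨hn⟩
  refine ⟨FiniteField.Extension F p n, inferInstance, Fintype.ofFinite _, inferInstance, ?_,
    FiniteField.finrank_extension F p n⟩
  rw [Fintype.card_eq_nat_card, FiniteField.natCard_extension, Nat.card_eq_fintype_card]

section FiniteField

open scoped IntermediateField

variable {F K : Type*} [Field F] [Fintype F] [Field K] [Finite K] [Algebra F K]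

theorem mem_range_algebraMap_of_pow_card_eq_self {x : K} (hx : x ^ Fintype.card F = x) :
    x ∈ Set.range (algebraMap F K) := by
  rw [IsGalois.mem_range_algebraMap_iff_fixed]
  intro g
  obtain ⟨i, rfl⟩ := (FiniteField.bijective_frobeniusAlgEquivOfAlgebraic_pow F K).2 g
  rw [AlgEquiv.coe_pow, FiniteField.coe_frobeniusAlgEquivOfAlgebraic]
  exact Function.iterate_fixed hx i

theorem pow_card_pow_natDegree_minpoly (b : K) :
    b ^ Fintype.card F ^ (minpoly F b).natDegree = b := by
  have : Fintype F⟮b⟯ := Fintype.ofFinite _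
  have hcard : Fintype.card F⟮b⟯ = Fintype.card F ^ (minpoly F b).natDegree := by
    rw [Module.card_eq_pow_finrank (K := F), IntermediateField.adjoin.finrank (.of_finite F b)]
  simpa [hcard] using
    congrArg Subtype.val (FiniteField.pow_card (IntermediateField.AdjoinSimple.gen F b))

/-- The product is fixed by the Frobenius because `b ^ q ^ d = b`, so it has coefficients in `F`;
it is monic of degree `d` with root `b`. -/
theorem map_minpoly_eq_prod (b : K) :
    (minpoly F b).map (algebraMap F K) =
      ∏ t ∈ range (minpoly F b).natDegree, (X - C (b ^ Fintype.card F ^ t)) := by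
  set d := (minpoly F b).natDegree
  set q := Fintype.card F
  set P' := ∏ t ∈ range d, (X - C (b ^ q ^ t))
  have hint : IsIntegral F b := .of_finite F b
  have hmonic : P'.Monic := monic_prod_of_monic _ _ fun t _ => monic_X_sub_C _
  have hdeg : P'.natDegree = d := by
    rw [natDegree_prod_of_monic _ _ fun t _ => monic_X_sub_C _]
    simp only [natDegree_X_sub_C, sum_const, card_range, smul_eq_mul, mul_one]
  let φ : K →+* K := (FiniteField.frobeniusAlgHom F K).toRingHom
  have hφ (x : K) : φ x = x ^ q := rfl
  have hfrob : P'.map φ = P' := by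
    apply mul_right_cancel₀ (X_sub_C_ne_zero b)
    calc P'.map φ * (X - C b)
        = (∏ t ∈ range d, (X - C (b ^ q ^ (t + 1)))) * (X - C (b ^ q ^ 0)) := by
          simp only [P', Polynomial.map_prod, Polynomial.map_sub, map_X, map_C, hφ, ← pow_mul,
            ← pow_succ, pow_zero, pow_one]
      _ = P' * (X - C (b ^ q ^ d)) := by
          rw [← prod_range_succ' (fun t => X - C (b ^ q ^ t)), prod_range_succ]
      _ = P' * (X - C b) := by rw [pow_card_pow_natDegree_minpoly]
  have hlifts : P' ∈ lifts (algebraMap F K) := by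
    refine (lifts_iff_coeff_lifts P').2 fun j => mem_range_algebraMap_of_pow_card_eq_self ?_
    rw [← hφ, ← coeff_map, hfrob]
  obtain ⟨P, hPmap, hPdeg, hPmonic⟩ := lifts_and_natDegree_eq_and_monic hlifts hmonic
  have hroot : aeval b P = 0 := by
    rw [aeval_def, ← eval_map, hPmap, eval_prod]
    exact prod_eq_zero (mem_range.2 (minpoly.natDegree_pos hint)) (by simp)
  have hP : P = minpoly F b := eq_of_monic_of_dvd_of_natDegree_le (minpoly.monic hint) hPmonic
    (minpoly.dvd F b hroot) (by rw [hPdeg, hdeg])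
  rw [← hP, hPmap]

theorem natDegree_minpoly_eq_finrank {M : ℕ}
    (hM : ∀ m ∈ (Module.finrank F K).properDivisors, Fintype.card F ^ m - 1 ∣ M)
    {b : K} (hb0 : b ≠ 0) (hbM : b ^ M ≠ 1) : (minpoly F b).natDegree = Module.finrank F K := by
  have hdvd := minpoly.degree_dvd (IsIntegral.of_finite F b)
  by_contra hne
  obtain ⟨k, rfl⟩ := hM _ (Nat.mem_properDivisors.2
    ⟨hdvd, lt_of_le_of_ne (Nat.le_of_dvd Module.finrank_pos hdvd) hne⟩)
  have hb1 : b ^ (Fintype.card F ^ (minpoly F b).natDegree - 1) = 1 := by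
    refine mul_right_cancel₀ hb0 ?_
    rw [pow_sub_one_mul (by positivity), pow_card_pow_natDegree_minpoly, one_mul]
  exact hbM (by rw [pow_mul, hb1, one_pow])

variable {n : ℕ} [NeZero (Fintype.card F ^ n - 1)] {b : K} (hb : (minpoly F b).natDegree = n)
include hb

theorem algebraMap_coeff_minpoly {w : ℕ} (hw : w ≤ n) (hqw : Fintype.card F = 2 → w ≠ n) :
    algebraMap F K ((minpoly F b).coeff (n - w)) =
      (-1) ^ w * dft b (deltaFun (Fintype.card F) n w) := by
  have h := coeff_prod_X_sub_C (range n) (fun t => b ^ Fintype.card F ^ t) (k := w) (by simpa)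
  rw [card_range] at h
  rw [← coeff_map, map_minpoly_eq_prod, hb, h, dft_deltaFun hqw]
  congr 1
  exact sum_congr rfl fun s _ => prod_pow_eq_pow_sum s _ b

theorem dft_map_signed_deltaFun_sum {W : Finset ℕ} (hW : W ⊆ range (n + 1))
    (hqW : Fintype.card F = 2 → n ∉ W) (c : F) :
    dft b (fun j => algebraMap F K ((∑ w ∈ W, (-1 : F) ^ w * deltaFun (Fintype.card F) n w j) -
      c * deltaFun (Fintype.card F) n 0 j)) =
      algebraMap F K (∑ w ∈ W, (minpoly F b).coeff (n - w) - c) := by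
  have hn := (one_lt_and_ne_zero_of_pow_sub_one_ne_zero (NeZero.ne (Fintype.card F ^ n - 1))).2
  have h0 : dft b (deltaFun (Fintype.card F) n 0 : ZMod _ → K) = 1 := by
    simp [dft_deltaFun (fun _ => hn.symm)]
  have hfun : (fun j => algebraMap F K
      ((∑ w ∈ W, (-1 : F) ^ w * deltaFun (Fintype.card F) n w j) -
        c * deltaFun (Fintype.card F) n 0 j)) =
      ∑ w ∈ W, (-1 : K) ^ w • deltaFun (Fintype.card F) n w -
        algebraMap F K c • deltaFun (Fintype.card F) n 0 := by
    funext j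
    simp [map_deltaFun, Algebra.smul_def]
  rw [hfun, map_sub, map_sum, map_smul, h0, map_sub, map_sum, smul_eq_mul, mul_one]
  congr 1
  refine sum_congr rfl fun w hw => ?_
  have hwn : w ≤ n := Nat.lt_succ_iff.mp (mem_range.mp (hW hw))
  rw [map_smul, smul_eq_mul, algebraMap_coeff_minpoly hb hwn fun h2 hwn' => hqW h2 (hwn' ▸ hw)]

end FiniteField

theorem exists_irreducible_sum_eq
    {F : Type*} [Field F] [Fintype F] (c : F) (n : ℕ) (hn : 2 ≤ n)
    (W : Finset ℕ) (hW : W ⊆ Finset.range (n + 1))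
    (hq2 : Fintype.card F = 2 → n ∉ W)
    (hper : ¬ ((leastPeriod (fun k : ZMod (Fintype.card F ^ n - 1) =>
        (if k = 0 then (1 : F) else 0) -
          convPow (Fintype.card F ^ n - 1)
            (fun j : ZMod (Fintype.card F ^ n - 1) =>
              (∑ w ∈ W, (-1 : F) ^ w * deltaFun (Fintype.card F) n w j) -
                c * deltaFun (Fintype.card F) n 0 j)
            (Fintype.card F - 1) k) : ℤ) ∣
        ((Fintype.card F : ℤ) ^ n - 1) / (Polynomial.cyclotomic n ℤ).eval (Fintype.card F : ℤ))) :
    ∃ P : Polynomial F, P.Monic ∧ Irreducible P ∧ P.natDegree = n ∧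
      (∑ w ∈ W.image (fun w => n - w), P.coeff w) = c := by
  obtain ⟨K, _, _, _, hK, hfinrank⟩ := exists_extension_card_eq F (n := n) (by omega)
  set q := Fintype.card F
  have hqn : 1 < q ^ n := Nat.one_lt_pow (by omega) Fintype.one_lt_card
  have : NeZero (q ^ n - 1) := ⟨by omega⟩
  obtain ⟨M, hM, hMdvd⟩ := exists_natCast_eq_div_cyclotomic (Fintype.one_lt_card (α := F)) n
  rw [← hM, Int.natCast_dvd_natCast] at hper
  have hnot : ¬ IsPeriodicZMod (fun k => algebraMap F K ((if k = 0 then 1 else 0) -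
      convPow (q ^ n - 1) _ (q - 1) k)) M :=
    fun h => hper (leastPeriod_dvd fun i => (algebraMap F K).injective (h i))
  obtain ⟨b, hb0, hbM, hΔ⟩ :=
    exists_dft_ne_zero_of_not_isPeriodicZMod (by omega : Fintype.card K = q ^ n - 1 + 1) hnot
  have hdeg : (minpoly F b).natDegree = n :=
    (natDegree_minpoly_eq_finrank (hfinrank ▸ hMdvd) hb0 hbM).trans hfinrank
  have hbN : b ^ (q ^ n - 1) = 1 := by
    simpa [hK] using FiniteField.pow_card_sub_one_eq_one b hb0
  rw [dft_map_sub_convPow hbN, dft_map_signed_deltaFun_sum hdeg hW hq2, ← map_pow,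
    ← map_one (algebraMap F K), ← map_sub] at hΔ
  refine ⟨minpoly F b, minpoly.monic (.of_finite F b), minpoly.irreducible (.of_finite F b),
    hdeg, ?_⟩
  rw [sum_image fun x hx y hy _ => by have := hW hx; have := hW hy; simp at *; omega]
  by_contra hne
  exact hΔ (by
    rw [FiniteField.pow_card_sub_one_eq_one _ (sub_ne_zero.mpr hne), sub_self, map_zero])
end
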